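/- arXiv:math/9909007 — 2 statements merged into one kernel-verified Lean document; each statement's English description precedes it below -/
import Mathlib

section
/- Let U be a vector space, U₁ a subspace, and let f(x) = Σ_{n∈ℤ} f_n x^{-n-1} ∈ U[[x,x^{-1}]] and g(x) = Σ_{n∈ℤ} g_n x^{-n-1} ∈ U₁[[x,x^{-1}]]. Suppose f(x) ∈ U((x)), i.e. f is a formal Laurent series truncated below, and that there exist k ∈ ℕ and a nonzero complex number z such that (x-z)^k f(x) = (x-z)^k g(x), where (x-z)^k is expanded as Σ_i (-z)^i C(k,i) x^{k-i}. Then for every n ∈ ℤ, f_n lies in the linear span of {g_m | m ≥ n}. In particular all coefficients of f lie in U₁. -/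
/-- Lemma 2.1 of the paper, `U((x))` case.
`f(x) = Σ_{n∈ℤ} f_n x^{-n-1}` and `g(x) = Σ_{n∈ℤ} g_n x^{-n-1}` are doubly infinite
formal series represented by their coefficient functions `f g : ℤ → U`.  The coefficients
of `g` lie in the subspace `U₁`, `f` is lower truncated (`f ∈ U((x))`, i.e. `f n = 0` for
`n` sufficiently large), and `(x-z)^k f(x) = (x-z)^k g(x)`, stated coefficientwise using
the binomial expansion `(x-z)^k = Σ_i (-z)^i C(k,i) x^{k-i}` (the coefficient of
`x^{-n-1}` in `(x-z)^k f(x)` is `Σ_{i≤k} C(k,i) (-z)^i f_{n+k-i}`).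
Then every `f n` lies in the span of `{g m | m ≥ n}`; in particular `f n ∈ U₁`. -/
theorem stmt0 (U : Type) [AddCommGroup U] [Module ℂ U] (U₁ : Submodule ℂ U)
    (f g : ℤ → U) (hg : ∀ n : ℤ, g n ∈ U₁)
    (hf : ∃ N : ℤ, ∀ n : ℤ, N ≤ n → f n = 0)
    (k : ℕ) (z : ℂ) (hz : z ≠ 0)
    (heq : ∀ n : ℤ,
      ∑ i ∈ Finset.range (k + 1), ((k.choose i : ℂ) * (-z) ^ i) • f (n + k - i) =
      ∑ i ∈ Finset.range (k + 1), ((k.choose i : ℂ) * (-z) ^ i) • g (n + k - i)) :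
    ∀ n : ℤ,
      f n ∈ Submodule.span ℂ {u : U | ∃ m : ℤ, n ≤ m ∧ u = g m} ∧ f n ∈ U₁ := by
  obtain ⟨N, hN⟩ := hf
  have mono : ∀ n m : ℤ, n ≤ m →
      Submodule.span ℂ {u : U | ∃ m' : ℤ, m ≤ m' ∧ u = g m'} ≤
      Submodule.span ℂ {u : U | ∃ m' : ℤ, n ≤ m' ∧ u = g m'} := by
    intro n m hnm
    apply Submodule.span_mono
    rintro u ⟨m', hm', rfl⟩
    exact ⟨m', le_trans hnm hm', rfl⟩
  have key : ∀ d : ℕ, ∀ n : ℤ, N ≤ n + d →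
      f n ∈ Submodule.span ℂ {u : U | ∃ m : ℤ, n ≤ m ∧ u = g m} := by
    intro d
    induction d with
    | zero =>
      intro n hn
      rw [hN n (by simpa using hn)]
      exact Submodule.zero_mem _
    | succ d ih =>
      intro n hn
      by_cases hcase : N ≤ n
      · rw [hN n hcase]; exact Submodule.zero_mem _
      push_neg at hcase
      set P := Submodule.span ℂ {u : U | ∃ m : ℤ, n ≤ m ∧ u = g m} with hP
      have hgP : ∀ m : ℤ, n ≤ m → g m ∈ P := fun m hm =>
        Submodule.subset_span ⟨m, hm, rfl⟩
      have hfP : ∀ m : ℤ, n < m → f m ∈ P := by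
        intro m hm
        have h1 : N ≤ m + d := by push_cast at hn ⊢; omega
        exact mono n m (le_of_lt hm) (ih m h1)
      have hk : ((-z : ℂ) ^ k) ≠ 0 := pow_ne_zero _ (neg_ne_zero.mpr hz)
      have he := heq n
      rw [Finset.sum_range_succ] at he
      have hkk : ((k.choose k : ℂ) * (-z) ^ k) • f (n + k - k) = ((-z) ^ k) • f n := by
        simp
      rw [hkk] at he
      have hexpr : ((-z : ℂ) ^ k) • f n =
          (∑ i ∈ Finset.range (k + 1), ((k.choose i : ℂ) * (-z) ^ i) • g (n + k - i)) -
          (∑ i ∈ Finset.range k, ((k.choose i : ℂ) * (-z) ^ i) • f (n + k - i)) := by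
        rw [← he]; abel
      have hmem : ((-z : ℂ) ^ k) • f n ∈ P := by
        rw [hexpr]
        apply Submodule.sub_mem
        · apply Submodule.sum_mem
          intro i hi
          apply Submodule.smul_mem
          apply hgP
          have : (i : ℤ) ≤ k := by
            simp only [Finset.mem_range] at hi; omega
          omega
        · apply Submodule.sum_mem
          intro i hi
          apply Submodule.smul_mem
          apply hfP
          have : (i : ℤ) < k := by
            simp only [Finset.mem_range] at hi
            exact_mod_cast hi
          omega
      have : f n = ((-z : ℂ) ^ k)⁻¹ • (((-z : ℂ) ^ k) • f n) := by
        rw [smul_smul, inv_mul_cancel₀ hk, one_smul]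
      rw [this]
      exact Submodule.smul_mem _ _ hmem
  intro n
  have hspan : f n ∈ Submodule.span ℂ {u : U | ∃ m : ℤ, n ≤ m ∧ u = g m} := by
    rcases le_or_gt N n with h | h
    · exact key 0 n (by simpa using h)
    · exact key (N - n).toNat n (by omega)
  refine ⟨hspan, ?_⟩
  have hle : Submodule.span ℂ {u : U | ∃ m : ℤ, n ≤ m ∧ u = g m} ≤ U₁ := by
    rw [Submodule.span_le]
    rintro u ⟨m, _, rfl⟩
    exact hg m
  exact hle hspan
end

section
/- Let U be a vector space, U₁ a subspace, f(x) = Σ_{n∈ℤ} f_n x^{-n-1} ∈ U((x^{-1})) (only finitely many positive powers of x occur) and g(x) = Σ_{n∈ℤ} g_n x^{-n-1} ∈ U₁[[x,x^{-1}]]. If there exist k ∈ ℕ and z ∈ ℂ^× with (x-z)^k f(x) = (x-z)^k g(x), then for every n ∈ ℤ, f_n lies in the linear span of {g_m | m ≤ n}. -/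
/-! Since the leading coefficient of `(x - z)^k` is `1`, comparing coefficients of
`x^{-n-1}` expresses `f n` through `g (n - i)` for `i ≤ k` and `f (n - i)` for
`1 ≤ i ≤ k`; as `f` vanishes far enough down, induction from below puts `f n` in the
span of the `g m` with `m ≤ n`. -/

open Finset Submodule

section

variable {R M : Type*} [Ring R] [AddCommGroup M] [Module R M]

theorem eq_sub_sum_of_sum_smul_eq {c : ℕ → R} (hc : c 0 = 1) {K : ℕ} {f g : ℤ → M}
    {n : ℤ}
    (h : ∑ i ∈ range (K + 1), c i • f (n - i) = ∑ i ∈ range (K + 1), c i • g (n - i)) :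
    f n = ∑ i ∈ range (K + 1), c i • g (n - i) -
      ∑ i ∈ range K, c (i + 1) • f (n - (i + 1 : ℕ)) := by
  rw [sum_range_succ', hc, Nat.cast_zero, sub_zero, one_smul] at h
  exact eq_sub_of_add_eq' h

theorem mem_span_image_Iic_of_sum_smul_eq {c : ℕ → R} (hc : c 0 = 1) {K : ℕ} {f g : ℤ → M}
    (hf : ∃ N : ℤ, ∀ n ≤ N, f n = 0)
    (h : ∀ n : ℤ,
      ∑ i ∈ range (K + 1), c i • f (n - i) = ∑ i ∈ range (K + 1), c i • g (n - i))
    (n : ℤ) : f n ∈ span R (g '' Set.Iic n) := by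
  obtain ⟨N, hN⟩ := hf
  have span_mono {a b : ℤ} (hab : a ≤ b) :
      span R (g '' Set.Iic a) ≤ span R (g '' Set.Iic b) :=
    span_mono (Set.image_mono (Set.Iic_subset_Iic.mpr hab))
  suffices ∀ d : ℕ, ∀ m ≤ N + d, f m ∈ span R (g '' Set.Iic m) from
    this (n - N).toNat n (by omega)
  intro d
  induction d with
  | zero => intro m hm; simp [hN m (by simpa using hm)]
  | succ d ih =>
    intro m hm
    rw [eq_sub_sum_of_sum_smul_eq hc (h m)]
    refine sub_mem (sum_mem fun i _ => smul_mem _ _ ?_) (sum_mem fun i _ => smul_mem _ _ ?_)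
    · exact subset_span ⟨m - i, by simp, rfl⟩
    · exact span_mono (by omega) (ih _ (by push_cast at hm ⊢; omega))

end

theorem stmt1_general (U : Type) [AddCommGroup U] [Module ℂ U] (U₁ : Submodule ℂ U)
    (f g : ℤ → U) (hg : ∀ n : ℤ, g n ∈ U₁)
    (hf : ∃ N : ℤ, ∀ n : ℤ, n ≤ N → f n = 0)
    (k : ℕ) (z : ℂ)
    (heq : ∀ n : ℤ,
      ∑ i ∈ Finset.range (k + 1), ((k.choose i : ℂ) * (-z) ^ i) • f (n + k - i) =
      ∑ i ∈ Finset.range (k + 1), ((k.choose i : ℂ) * (-z) ^ i) • g (n + k - i)) :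
    ∀ n : ℤ,
      f n ∈ Submodule.span ℂ {u : U | ∃ m : ℤ, m ≤ n ∧ u = g m} ∧ f n ∈ U₁ := by
  intro n
  have hspan : {u : U | ∃ m : ℤ, m ≤ n ∧ u = g m} = g '' Set.Iic n := by
    ext u; simp [eq_comm]
  have hfn : f n ∈ span ℂ (g '' Set.Iic n) :=
    mem_span_image_Iic_of_sum_smul_eq (c := fun i => (k.choose i : ℂ) * (-z) ^ i) (by simp) hf
      (fun m => by simpa using heq (m - k)) n
  rw [hspan]
  exact ⟨hfn, span_le.mpr (Set.image_subset_iff.mpr fun m _ => hg m) hfn⟩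

/-- Lemma 2.1 of the paper, `U((x⁻¹))` case.
`f(x) = Σ_{n∈ℤ} f_n x^{-n-1}` and `g(x) = Σ_{n∈ℤ} g_n x^{-n-1}` are doubly infinite
formal series represented by their coefficient functions `f g : ℤ → U`.  The coefficients
of `g` lie in the subspace `U₁`, `f` is lower truncated (`f ∈ U((x⁻¹))`, i.e. `f n = 0` for
`n` sufficiently small), and `(x-z)^k f(x) = (x-z)^k g(x)`, stated coefficientwise using
the binomial expansion `(x-z)^k = Σ_i (-z)^i C(k,i) x^{k-i}` (the coefficient of
`x^{-n-1}` in `(x-z)^k f(x)` is `Σ_{i≤k} C(k,i) (-z)^i f_{n+k-i}`).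
Then every `f n` lies in the span of `{g m | m ≤ n}`; in particular `f n ∈ U₁`. (`U((x⁻¹))` case.) -/
theorem stmt1 (U : Type) [AddCommGroup U] [Module ℂ U] (U₁ : Submodule ℂ U)
    (f g : ℤ → U) (hg : ∀ n : ℤ, g n ∈ U₁)
    (hf : ∃ N : ℤ, ∀ n : ℤ, n ≤ N → f n = 0)
    (k : ℕ) (z : ℂ) (hz : z ≠ 0)
    (heq : ∀ n : ℤ,
      ∑ i ∈ Finset.range (k + 1), ((k.choose i : ℂ) * (-z) ^ i) • f (n + k - i) =
      ∑ i ∈ Finset.range (k + 1), ((k.choose i : ℂ) * (-z) ^ i) • g (n + k - i)) :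
    ∀ n : ℤ,
      f n ∈ Submodule.span ℂ {u : U | ∃ m : ℤ, m ≤ n ∧ u = g m} ∧ f n ∈ U₁ :=
  stmt1_general U U₁ f g hg hf k z heq
end
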